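/- arXiv:1601.03954 — 4 statements merged into one kernel-verified Lean document; each statement's English description precedes it below -/
import Mathlib

section
/- Let f be a root with |f| > 1 of X² − aX − b = 0, where a ∈ F_q[T] has degree d > 0 and b ∈ F_q^×, and let Q_n be the associated recursive sequence Q_0 = 1, Q_1 = a, Q_{n+1} = a·Q_n + b·Q_{n−1}. Then for all n ≥ 0, |Q_n·f − Q_{n+1}| = q^{−(n+1)d}. In particular ‖Q_n·f‖ = q^{−(n+1)d} < 1, where ‖x‖ denotes the distance from x to the nearest element of A, and Q_{n+1} is the element of A closest to Q_n·f. -/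
/-!
Since `a - f` is the conjugate root `f'`, the recursion gives `Q n · f - Q (n+1) = -(a - f)^(n+1)`.
The ultrametric inequality applied to `f² = a f + b` gives `|f| = |a| = q^d`, hence
`|a - f| = |b| / |f| = q^{-d}` and `|Q n f - Q (n+1)| = q^{-(n+1)d} < 1`. Every nonzero
polynomial has absolute value at least `1`, so for any other `μ ∈ A` the ultrametric inequality
gives `|Q n f - μ| = |Q (n+1) - μ| ≥ 1`.
-/

open Polynomial

/-- `‖x‖`: the distance from `x ∈ K` to the nearest element of `A = F_q[T]` (embedded via `ι`),
with respect to the absolute value `v`. -/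
noncomputable def pnorm {Fq K : Type*} [Field Fq] [Field K]
    (ι : Polynomial Fq →+* K) (v : AbsoluteValue K ℝ) (x : K) : ℝ :=
  sInf (Set.range fun p : Polynomial Fq => v (x - ι p))

theorem mul_root_sub_succ_eq_neg_pow {R : Type*} [CommRing R] {f α β : R}
    (hroot : f ^ 2 = α * f + β) {P : ℕ → R} (hP0 : P 0 = 1) (hP1 : P 1 = α)
    (hrec : ∀ n, P (n + 2) = α * P (n + 1) + β * P n) (n : ℕ) :
    P n * f - P (n + 1) = -(α - f) ^ (n + 1) := by
  induction n with
  | zero => rw [hP0, hP1]; ring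
  | succ n ih =>
    have hstep : P (n + 1) * f - P (n + 2) = (α - f) * (P n * f - P (n + 1)) := by
      rw [hrec n]
      linear_combination P n * hroot
    rw [hstep, ih]
    ring

section Nonarchimedean

variable {K : Type*} [Field K] {v : AbsoluteValue K ℝ}

theorem AbsoluteValue.eq_of_sq_eq_mul_add (hna : IsNonarchimedean v) {f α β : K}
    (hroot : f ^ 2 = α * f + β) (hlt : v β < v α * v f) : v f = v α := by
  have hf : v f ≠ 0 := by
    rintro h
    rw [h, mul_zero] at hlt
    exact (v.nonneg β).not_gt hlt
  have hsq : v f * v f = v α * v f := by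
    rw [← v.map_mul, ← sq, hroot, hna.add_eq_left_of_lt (by rwa [v.map_mul]), v.map_mul]
  exact mul_right_cancel₀ hf hsq

theorem AbsoluteValue.sub_eq_div_of_sq_eq_mul_add {f α β : K} (hroot : f ^ 2 = α * f + β)
    (hf : f ≠ 0) : v (α - f) = v β / v f := by
  have hprod : f * (f - α) = β := by linear_combination hroot
  rw [v.map_sub, eq_div_iff (v.ne_zero hf), mul_comm, ← v.map_mul, hprod]

variable {Fq : Type*} [Field Fq] {ι : Polynomial Fq →+* K}

theorem abs_sub_lt_abs_sub_of_lt_one (hna : IsNonarchimedean v)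
    (hpoly : ∀ g : Polynomial Fq, g ≠ 0 → 1 ≤ v (ι g)) {x : K} {p : Polynomial Fq}
    (hp : v (x - ι p) < 1) {μ : Polynomial Fq} (hμ : μ ≠ p) :
    v (x - ι p) < v (x - ι μ) := by
  have hfar : v (x - ι p) < v (ι (p - μ)) := hp.trans_le (hpoly _ (sub_ne_zero.mpr hμ.symm))
  have hsplit : x - ι μ = ι (p - μ) + (x - ι p) := by rw [map_sub]; ring
  rwa [hsplit, hna.add_eq_left_of_lt hfar]

theorem pnorm_eq_of_lt_one (hna : IsNonarchimedean v)
    (hpoly : ∀ g : Polynomial Fq, g ≠ 0 → 1 ≤ v (ι g)) {x : K} {p : Polynomial Fq}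
    (hp : v (x - ι p) < 1) : pnorm ι v x = v (x - ι p) := by
  refine le_antisymm ?_ ?_
  · exact csInf_le ⟨0, by rintro _ ⟨μ, rfl⟩; exact v.nonneg _⟩ ⟨p, rfl⟩
  · refine le_csInf (Set.range_nonempty _) ?_
    rintro _ ⟨μ, rfl⟩
    obtain rfl | hμ := eq_or_ne μ p
    · exact le_rfl
    · exact (abs_sub_lt_abs_sub_of_lt_one hna hpoly hp hμ).le

end Nonarchimedean

/-- For `f` the root with `|f| > 1` of `X² - aX - b` (`deg a = d > 0`,
`b ∈ F_q^×`) and `Q_n` the recursive sequence `Q_0 = 1, Q_1 = a, Q_{n+1} = a Q_n + b Q_{n-1}`,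
one has `|Q_n f - Q_{n+1}| = q^{-(n+1)d}`, hence `‖Q_n f‖ = q^{-(n+1)d} < 1` and `Q_{n+1}` is
the element of `A` closest to `Q_n f`. -/
theorem stmt_3 {Fq K : Type*} [Field Fq] [Fintype Fq] [Field K]
    (ι : Polynomial Fq →+* K) (v : AbsoluteValue K ℝ)
    (hna : ∀ x y : K, v (x + y) ≤ max (v x) (v y))
    (hdeg : ∀ g : Polynomial Fq, g ≠ 0 → v (ι g) = (Fintype.card Fq : ℝ) ^ g.natDegree)
    (a : Polynomial Fq) (d : ℕ) (hda : a.natDegree = d) (hd : 0 < d)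
    (b : Fq) (hb : b ≠ 0)
    (f : K) (hroot : f ^ 2 = ι a * f + ι (C b)) (hf : 1 < v f)
    (Q : ℕ → Polynomial Fq) (hQ0 : Q 0 = 1) (hQ1 : Q 1 = a)
    (hQrec : ∀ n, Q (n + 2) = a * Q (n + 1) + C b * Q n) :
    ∀ n : ℕ,
      v (ι (Q n) * f - ι (Q (n + 1))) = ((Fintype.card Fq : ℝ) ^ (d * (n + 1)))⁻¹ ∧
      pnorm ι v (ι (Q n) * f) = ((Fintype.card Fq : ℝ) ^ (d * (n + 1)))⁻¹ ∧
      ((Fintype.card Fq : ℝ) ^ (d * (n + 1)))⁻¹ < 1 ∧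
      ∀ μ : Polynomial Fq, μ ≠ Q (n + 1) →
        v (ι (Q n) * f - ι (Q (n + 1))) < v (ι (Q n) * f - ι μ) := by
  intro n
  set q : ℝ := (Fintype.card Fq : ℝ)
  have hpoly : ∀ g : Polynomial Fq, g ≠ 0 → 1 ≤ v (ι g) := fun g hg ↦
    hdeg g hg ▸ one_le_pow₀ (Nat.one_le_cast.mpr Fintype.card_pos)
  have ha : a ≠ 0 := by rintro rfl; simp [← hda] at hd
  have hva : v (ι a) = q ^ d := by rw [hdeg a ha, hda]
  have hvb : v (ι (C b)) = 1 := by rw [hdeg (C b) (C_ne_zero.mpr hb), natDegree_C, pow_zero]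
  have hvf : v f = q ^ d := hva ▸ v.eq_of_sq_eq_mul_add hna hroot
    (hvb ▸ one_lt_mul_of_le_of_lt (hpoly a ha) hf)
  have hconj : v (ι a - f) = (q ^ d)⁻¹ := by
    rw [v.sub_eq_div_of_sq_eq_mul_add hroot (v.pos_iff.mp (one_pos.trans hf)), hvb, hvf, one_div]
  have herr : v (ι (Q n) * f - ι (Q (n + 1))) = (q ^ (d * (n + 1)))⁻¹ := by
    rw [mul_root_sub_succ_eq_neg_pow (P := fun n ↦ ι (Q n)) hroot (by simp [hQ0]) (by simp [hQ1])
      (by simp [hQrec]), v.map_neg, v.map_pow, hconj, inv_pow, pow_mul]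
  have hsmall : (q ^ (d * (n + 1)))⁻¹ < 1 :=
    inv_lt_one_of_one_lt₀ (pow_mul q d (n + 1) ▸ one_lt_pow₀ (hvf ▸ hf) n.succ_ne_zero)
  exact ⟨herr, herr ▸ pnorm_eq_of_lt_one hna hpoly (herr ▸ hsmall), hsmall,
    fun μ hμ ↦ abs_sub_lt_abs_sub_of_lt_one hna hpoly (herr ▸ hsmall) hμ⟩
end

section
/- For 0 ≤ l ≤ d−1 and n ≥ 0, ‖T^l·Q̄_n·f‖ = |T^l·Q̄_n·f − T^l·Q̄_{n+1}| = q^{l − (n+1)d} < 1, and the nearest element of A to T^l·Q̄_n·f is T^l·Q̄_{n+1} (up to the scalar relating Q̄ and Q). Consequently the map B → q^{−ℕ} sending T^l·Q̄_n to ‖T^l·Q̄_n·f‖ is a bijection from B onto the set { q^{−m} : m ≥ 1 } of possible errors. -/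
/-!
With `f' = a - f` the conjugate root, `f f' = -b`, and the term `a f` dominates `f ^ 2 = a f + b`,
so `|f| = q ^ d` and `|f'| = q ^ (-d)`. The recurrence gives `Q n f - Q (n + 1) = -f' ^ (n + 1)`,
hence `T ^ l Q̄ n f` lies within `q ^ (l - (n + 1) d) < 1` of a polynomial. Nonzero polynomials have
absolute value at least `1`, so by the ultrametric inequality that polynomial is the unique
nearest one. Finally `(n + 1) d - l` is one more than the number with quotient `n` and remainder
`d - 1 - l` modulo `d`, so it runs bijectively over the `m ≥ 1`.
-/

open Polynomial

section BestApproximation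

variable {K : Type*} [Field K] {v : AbsoluteValue K ℝ}

lemma apply_sub_lt_of_apply_sub_lt_one {R : Type*} [Ring R] {ι : R →+* K}
    (hv : IsNonarchimedean v) (hA : ∀ p : R, p ≠ 0 → 1 ≤ v (ι p)) {x : K} {p₀ : R}
    (h : v (x - ι p₀) < 1) {p : R} (hp : p ≠ p₀) : v (x - ι p₀) < v (x - ι p) := by
  have hgap : v (x - ι p₀) < v (ι (p₀ - p)) := h.trans_le (hA _ (sub_ne_zero.mpr hp.symm))
  have hsplit : x - ι p = ι (p₀ - p) + (x - ι p₀) := by rw [map_sub]; ring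
  rwa [hsplit, IsNonarchimedean.add_eq_left_of_lt hv hgap]

lemma pnorm_eq_of_apply_sub_lt_one {Fq : Type*} [Field Fq] {ι : Fq[X] →+* K}
    (hv : IsNonarchimedean v) (hA : ∀ p : Fq[X], p ≠ 0 → 1 ≤ v (ι p)) {x : K} {p₀ : Fq[X]}
    (h : v (x - ι p₀) < 1) : pnorm ι v x = v (x - ι p₀) := by
  refine IsLeast.csInf_eq ⟨⟨p₀, rfl⟩, ?_⟩
  rintro _ ⟨p, rfl⟩
  rcases eq_or_ne p p₀ with rfl | hp
  · exact le_rfl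
  · exact (apply_sub_lt_of_apply_sub_lt_one hv hA h hp).le

end BestApproximation

lemma mul_sub_eq_neg_pow_of_sq_eq_add {R : Type*} [CommRing R] {f α β : R}
    (hroot : f ^ 2 = α * f + β) {u : ℕ → R} (hu0 : u 0 = 1) (hu1 : u 1 = α)
    (hu : ∀ n, u (n + 2) = α * u (n + 1) + β * u n)
    (n : ℕ) : u n * f - u (n + 1) = -(α - f) ^ (n + 1) := by
  induction n with
  | zero => rw [hu0, hu1]; ring
  | succ k ih => rw [hu k]; linear_combination (α - f) * ih + u k * hroot

lemma apply_sub_eq_inv_of_sq_eq_add {K : Type*} [Field K] {v : AbsoluteValue K ℝ} {f α β : K}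
    (hv : IsNonarchimedean v) (hroot : f ^ 2 = α * f + β)
    (hβ : v β = 1) (hα : 1 ≤ v α) (hf : 1 < v f) : v (α - f) = (v α)⁻¹ := by
  have hdom : v β < v (α * f) := by rw [hβ, map_mul]; nlinarith
  have hvf : v f = v α := by
    have h : v f * v f = v α * v f := by
      rw [← map_mul, ← sq, hroot, IsNonarchimedean.add_eq_left_of_lt hv hdom, map_mul]
    exact mul_right_cancel₀ (one_pos.trans hf).ne' h
  refine eq_inv_of_mul_eq_one_left ?_
  rw [← hvf, mul_comm, ← map_mul, show f * (α - f) = -β by linear_combination -hroot, v.map_neg,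
    hβ]

lemma pow_mul_inv_pow_mul_succ_lt_one {d l : ℕ} {q : ℝ} (hq : 1 < q) (hl : l < d) (n : ℕ) :
    q ^ l * (q ^ (d * (n + 1)))⁻¹ < 1 := by
  rw [← div_eq_mul_inv, div_lt_one (by positivity)]
  exact pow_lt_pow_right₀ hq (hl.trans_le (Nat.le_mul_of_pos_right d n.succ_pos))

section Exponents

variable (d : ℕ) [NeZero d]

def revDivModEquiv : Fin d × ℕ ≃ ℕ :=
  ((Equiv.prodComm _ _).trans ((Equiv.refl ℕ).prodCongr Fin.revPerm)).trans
    (Nat.divModEquiv d).symm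

lemma revDivModEquiv_add_one (l : Fin d) (n : ℕ) :
    revDivModEquiv d (l, n) + 1 = d * (n + 1) - l := by
  have hl := l.isLt
  simp only [revDivModEquiv, Equiv.trans_apply, Equiv.prodComm_apply, Prod.swap_prod_mk,
    Equiv.prodCongr_apply, Prod.map, Equiv.refl_apply, Fin.revPerm_apply,
    Nat.divModEquiv_symm_apply, Fin.val_rev]
  rw [Nat.mul_succ, Nat.mul_comm]
  omega

variable {d} {q : ℝ}

lemma pow_mul_inv_pow_mul_succ (hq : q ≠ 0) (l : Fin d) (n : ℕ) :
    q ^ (l : ℕ) * (q ^ (d * (n + 1)))⁻¹ = (q ^ (revDivModEquiv d (l, n) + 1))⁻¹ := by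
  have hle : (l : ℕ) ≤ d * (n + 1) := l.isLt.le.trans (Nat.le_mul_of_pos_right d n.succ_pos)
  rw [revDivModEquiv_add_one, ← inv_pow q (_ - _), inv_pow_sub₀ hq hle, mul_comm]

lemma injective_pow_mul_inv_pow_mul_succ (hq : 1 < q) :
    Function.Injective fun p : Fin d × ℕ => q ^ (p.1 : ℕ) * (q ^ (d * (p.2 + 1)))⁻¹ := by
  have hinv : Function.Injective fun m : ℕ => (q ^ (m + 1))⁻¹ :=
    inv_injective.comp ((pow_right_injective₀ (by linarith) hq.ne').comp Nat.succ_injective)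
  intro p p' h
  simp only [pow_mul_inv_pow_mul_succ (q := q) (by linarith)] at h
  exact (revDivModEquiv d).injective (hinv h)

lemma range_pow_mul_inv_pow_mul_succ (hq : q ≠ 0) :
    Set.range (fun p : Fin d × ℕ => q ^ (p.1 : ℕ) * (q ^ (d * (p.2 + 1)))⁻¹) =
      {r : ℝ | ∃ m : ℕ, 1 ≤ m ∧ r = (q ^ m)⁻¹} := by
  ext r
  simp only [Set.mem_range, Set.mem_ofPred_eq, Prod.exists, pow_mul_inv_pow_mul_succ hq]
  constructor
  · rintro ⟨l, n, rfl⟩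
    exact ⟨_, Nat.le_add_left 1 _, rfl⟩
  · rintro ⟨m, hm, rfl⟩
    obtain ⟨⟨l, n⟩, hp⟩ := (revDivModEquiv d).surjective (m - 1)
    exact ⟨l, n, by rw [hp, Nat.sub_add_cancel hm]⟩

end Exponents

theorem stmt_6_general {Fq K : Type*} [Field Fq] [Fintype Fq] [Field K]
    (ι : Polynomial Fq →+* K) (v : AbsoluteValue K ℝ)
    (hna : ∀ x y : K, v (x + y) ≤ max (v x) (v y))
    (hdeg : ∀ g : Polynomial Fq, g ≠ 0 → v (ι g) = (Fintype.card Fq : ℝ) ^ g.natDegree)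
    (a : Polynomial Fq) (d : ℕ) (hda : a.natDegree = d) (hd : 0 < d)
    (b : Fq) (hb : b ≠ 0)
    (f : K) (hroot : f ^ 2 = ι a * f + ι (C b)) (hf : 1 < v f)
    (Q : ℕ → Polynomial Fq) (hQ0 : Q 0 = 1) (hQ1 : Q 1 = a)
    (hQrec : ∀ n, Q (n + 2) = a * Q (n + 1) + C b * Q n)
    (c : Fq) (hc : c ≠ 0)
    (Qbar : ℕ → Polynomial Fq) (hQbar : ∀ n, Qbar n = C (c ^ n) * Q n) :
    (∀ l : ℕ, l ≤ d - 1 → ∀ n : ℕ,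
      v (ι (X ^ l * Qbar n) * f - ι (X ^ l * C (c ^ n) * Q (n + 1))) =
        (Fintype.card Fq : ℝ) ^ l * ((Fintype.card Fq : ℝ) ^ (d * (n + 1)))⁻¹ ∧
      pnorm ι v (ι (X ^ l * Qbar n) * f) =
        (Fintype.card Fq : ℝ) ^ l * ((Fintype.card Fq : ℝ) ^ (d * (n + 1)))⁻¹ ∧
      (Fintype.card Fq : ℝ) ^ l * ((Fintype.card Fq : ℝ) ^ (d * (n + 1)))⁻¹ < 1 ∧
      (∀ μ : Polynomial Fq, μ ≠ X ^ l * C (c ^ n) * Q (n + 1) →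
        v (ι (X ^ l * Qbar n) * f - ι (X ^ l * C (c ^ n) * Q (n + 1))) <
          v (ι (X ^ l * Qbar n) * f - ι μ))) ∧
    Function.Injective
      (fun p : Fin d × ℕ => pnorm ι v (ι (X ^ (p.1 : ℕ) * Qbar p.2) * f)) ∧
    Set.range (fun p : Fin d × ℕ => pnorm ι v (ι (X ^ (p.1 : ℕ) * Qbar p.2) * f)) =
      {r : ℝ | ∃ m : ℕ, 1 ≤ m ∧ r = ((Fintype.card Fq : ℝ) ^ m)⁻¹} := by
  set q : ℝ := (Fintype.card Fq : ℝ)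
  have hq : 1 < q := Nat.one_lt_cast.2 Fintype.one_lt_card
  have hA : ∀ p : Fq[X], p ≠ 0 → 1 ≤ v (ι p) := fun p hp ↦ (hdeg p hp).symm ▸ one_le_pow₀ hq.le
  have hva : v (ι a) = q ^ d := by
    rw [hdeg a (by rintro rfl; simp at hda; omega), hda]
  have hvb : v (ι (C b)) = 1 := by rw [hdeg _ (C_ne_zero.2 hb), natDegree_C, pow_zero]
  have hconj : v (ι a - f) = (q ^ d)⁻¹ :=
    hva ▸ apply_sub_eq_inv_of_sq_eq_add hna hroot hvb (hva ▸ one_le_pow₀ hq.le) hf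
  have hQf : ∀ n, ι (Q n) * f - ι (Q (n + 1)) = -(ι a - f) ^ (n + 1) :=
    mul_sub_eq_neg_pow_of_sq_eq_add hroot (u := fun n ↦ ι (Q n)) (by simp [hQ0]) (by simp [hQ1])
      (fun n ↦ by simp [hQrec])
  have herr : ∀ l n, v (ι (X ^ l * Qbar n) * f - ι (X ^ l * C (c ^ n) * Q (n + 1))) =
      q ^ l * (q ^ (d * (n + 1)))⁻¹ := by
    intro l n
    have hc' : c ^ n ≠ 0 := pow_ne_zero n hc
    have hfactor : ι (X ^ l * Qbar n) * f - ι (X ^ l * C (c ^ n) * Q (n + 1)) =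
        ι (X ^ l * C (c ^ n)) * (ι (Q n) * f - ι (Q (n + 1))) := by
      rw [hQbar]; simp only [map_mul]; ring
    rw [hfactor, hQf, v.map_mul, v.map_neg, v.map_pow, hconj,
      hdeg _ (mul_ne_zero (pow_ne_zero l X_ne_zero) (C_ne_zero.2 hc')), natDegree_mul_C hc',
      natDegree_X_pow, ← inv_pow, ← pow_mul, inv_pow]
  have hlt : ∀ l < d, ∀ n, v (ι (X ^ l * Qbar n) * f - ι (X ^ l * C (c ^ n) * Q (n + 1))) < 1 :=
    fun l hl n ↦ herr l n ▸ pow_mul_inv_pow_mul_succ_lt_one hq hl n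
  have hpnorm : (fun p : Fin d × ℕ ↦ pnorm ι v (ι (X ^ (p.1 : ℕ) * Qbar p.2) * f)) =
      fun p ↦ q ^ (p.1 : ℕ) * (q ^ (d * (p.2 + 1)))⁻¹ :=
    funext fun p ↦ herr _ _ ▸ pnorm_eq_of_apply_sub_lt_one hna hA (hlt p.1 p.1.isLt p.2)
  have : NeZero d := ⟨hd.ne'⟩
  refine ⟨fun l hl n ↦ ?_, hpnorm ▸ injective_pow_mul_inv_pow_mul_succ hq,
    hpnorm ▸ range_pow_mul_inv_pow_mul_succ (by positivity)⟩
  have hld : l < d := by omega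
  exact ⟨herr l n, herr l n ▸ pnorm_eq_of_apply_sub_lt_one hna hA (hlt l hld n),
    pow_mul_inv_pow_mul_succ_lt_one hq hld n,
    fun μ hμ ↦ apply_sub_lt_of_apply_sub_lt_one hna hA (hlt l hld n) hμ⟩

/-- For `0 ≤ l ≤ d-1`, `n ≥ 0`:
`‖T^l Q̄_n f‖ = |T^l Q̄_n f - T^l c^n Q_{n+1}| = q^{l-(n+1)d} < 1`, the nearest element of `A`
to `T^l Q̄_n f` is `T^l c^n Q_{n+1}` (i.e. `T^l Q̄_{n+1}` up to the scalar relating `Q̄` and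
`Q`), and the error map `B → q^{-ℕ}`, `T^l Q̄_n ↦ ‖T^l Q̄_n f‖`, is a bijection onto
`{q^{-m} : m ≥ 1}`. -/
theorem stmt_6 {Fq K : Type*} [Field Fq] [Fintype Fq] [Field K]
    (ι : Polynomial Fq →+* K) (v : AbsoluteValue K ℝ)
    (hna : ∀ x y : K, v (x + y) ≤ max (v x) (v y))
    (hdeg : ∀ g : Polynomial Fq, g ≠ 0 → v (ι g) = (Fintype.card Fq : ℝ) ^ g.natDegree)
    (a : Polynomial Fq) (d : ℕ) (hda : a.natDegree = d) (hd : 0 < d)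
    (b : Fq) (hb : b ≠ 0)
    (f : K) (hroot : f ^ 2 = ι a * f + ι (C b)) (hf : 1 < v f)
    (Q : ℕ → Polynomial Fq) (hQ0 : Q 0 = 1) (hQ1 : Q 1 = a)
    (hQrec : ∀ n, Q (n + 2) = a * Q (n + 1) + C b * Q n)
    (c : Fq) (hc : c ≠ 0) (hca : (C c * a).Monic)
    (Qbar : ℕ → Polynomial Fq) (hQbar : ∀ n, Qbar n = C (c ^ n) * Q n) :
    (∀ l : ℕ, l ≤ d - 1 → ∀ n : ℕ,
      v (ι (X ^ l * Qbar n) * f - ι (X ^ l * C (c ^ n) * Q (n + 1))) =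
        (Fintype.card Fq : ℝ) ^ l * ((Fintype.card Fq : ℝ) ^ (d * (n + 1)))⁻¹ ∧
      pnorm ι v (ι (X ^ l * Qbar n) * f) =
        (Fintype.card Fq : ℝ) ^ l * ((Fintype.card Fq : ℝ) ^ (d * (n + 1)))⁻¹ ∧
      (Fintype.card Fq : ℝ) ^ l * ((Fintype.card Fq : ℝ) ^ (d * (n + 1)))⁻¹ < 1 ∧
      (∀ μ : Polynomial Fq, μ ≠ X ^ l * C (c ^ n) * Q (n + 1) →
        v (ι (X ^ l * Qbar n) * f - ι (X ^ l * C (c ^ n) * Q (n + 1))) <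
          v (ι (X ^ l * Qbar n) * f - ι μ))) ∧
    Function.Injective
      (fun p : Fin d × ℕ => pnorm ι v (ι (X ^ (p.1 : ℕ) * Qbar p.2) * f)) ∧
    Set.range (fun p : Fin d × ℕ => pnorm ι v (ι (X ^ (p.1 : ℕ) * Qbar p.2) * f)) =
      {r : ℝ | ∃ m : ℕ, 1 ≤ m ∧ r = ((Fintype.card Fq : ℝ) ^ m)⁻¹} :=
  stmt_6_general ι v hna hdeg a d hda hd b hb f hroot hf Q hQ0 hQ1 hQrec c hc Qbar hQbar
end

section
/- For ε > 0 define Λ_ε(f) = { λ ∈ A : ‖λf‖ < ε }, an F_q-subspace of A. Let l ∈ {0, …, d−1}, d_l = d−1−l, and N ≥ 0. Then Λ_{q^{−Nd−l}}(f) is precisely the F_q-span of { T^j·Q̄_N : 0 ≤ j ≤ d_l } ∪ { T^j·Q̄_n : 0 ≤ j ≤ d−1, n ≥ N+1 }. -/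
open Polynomial

/-- `Λ_ε(f) = { λ ∈ A : ‖λf‖ < ε }`. -/
def Lambda {Fq K : Type*} [Field Fq] [Field K]
    (ι : Polynomial Fq →+* K) (v : AbsoluteValue K ℝ) (f : K) (ε : ℝ) :
    Set (Polynomial Fq) :=
  {p | pnorm ι v (ι p * f) < ε}

/-!
The error terms satisfy `Q (n+1) - Q n f = (-b/f)^(n+1)`, and `|f| = q^d`, so `T^j Q̄_n f`
lies within `q^(j-(n+1)d) < 1` of the polynomial `T^j c^n Q (n+1)`; hence
`‖T^j Q̄_n f‖ = q^(j-(n+1)d)`. For `j < d` these values are pairwise distinct and `T^j Q̄_n`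
has degree `nd + j`, so each degree is attained exactly once. By the ultrametric inequality,
`‖λ f‖` is then at least the value at the basis element of the same degree as `λ`, and
subtracting leading terms shows that `Λ_ε` is spanned by the basis elements it contains.
The condition `j - (n+1)d < -(Nd + l)` selects exactly the listed ones.
-/

section AdaptedBasis

variable {F ι : Type*} [Field F] {φ : F[X] → ℝ} {t : ι → F[X]}

theorem exists_degree_sub_C_mul_lt {x y : F[X]} (hx : x ≠ 0) (hy : y ≠ 0)
    (h : x.natDegree = y.natDegree) : ∃ γ : F, γ ≠ 0 ∧ (x - C γ * y).degree < x.degree := by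
  have hγ : x.leadingCoeff / y.leadingCoeff ≠ 0 :=
    div_ne_zero (leadingCoeff_ne_zero.2 hx) (leadingCoeff_ne_zero.2 hy)
  refine ⟨_, hγ, degree_sub_lt_left ?_ hx ?_⟩
  · rw [degree_C_mul hγ, degree_eq_natDegree hx, degree_eq_natDegree hy, h]
  · rw [leadingCoeff_mul, leadingCoeff_C, div_mul_cancel₀ _ (leadingCoeff_ne_zero.2 hy)]

theorem apply_neg_eq_of_apply_C_mul (hφC : ∀ c : F, c ≠ 0 → ∀ x, φ (C c * x) = φ x) (x : F[X]) :
    φ (-x) = φ x := by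
  simpa using hφC (-1) (neg_ne_zero.2 one_ne_zero) x

theorem exists_apply_eq_apply_ge (hφ : IsNonarchimedean φ)
    (hφC : ∀ c : F, c ≠ 0 → ∀ x, φ (C c * x) = φ x) (ht0 : ∀ i, t i ≠ 0)
    (hdeg : ∀ m, ∃ i, (t i).natDegree = m) (hinj : Function.Injective (φ ∘ t))
    {x : F[X]} (hx : x ≠ 0) {i : ι} (hi : (t i).natDegree = x.natDegree) :
    ∃ k, (t k).natDegree ≤ x.natDegree ∧ φ x = φ (t k) ∧ φ (t i) ≤ φ (t k) := by
  induction hm : x.natDegree using Nat.strong_induction_on generalizing x i with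
  | _ m ih =>
  obtain ⟨γ, hγ, hlt⟩ := exists_degree_sub_C_mul_lt hx (ht0 i) hi.symm
  have hx_eq : x = C γ * t i + (x - C γ * t i) := by ring
  by_cases hx' : x - C γ * t i = 0
  · exact ⟨i, (hi.trans hm).le, by rw [hx_eq, hx', add_zero, hφC γ hγ], le_rfl⟩
  have hdeg' : (x - C γ * t i).natDegree < m := hm ▸ natDegree_lt_natDegree hx' hlt
  obtain ⟨i', hi'⟩ := hdeg (x - C γ * t i).natDegree
  obtain ⟨k, hk, hxk, -⟩ := ih _ hdeg' hx' hi' rfl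
  have hne : φ (t i) ≠ φ (t k) := fun h => by
    have : (t i).natDegree = (t k).natDegree := congrArg (fun j => (t j).natDegree) (hinj h)
    omega
  have hneg (y : F[X]) : φ y = φ (-y) := (apply_neg_eq_of_apply_C_mul hφC y).symm
  rw [hx_eq, hφ.add_eq_max_of_ne' φ hneg (by rwa [hφC γ hγ, hxk]), hφC γ hγ, hxk]
  rcases le_total (φ (t i)) (φ (t k)) with hik | hki
  · exact ⟨k, by omega, max_eq_right hik, hik⟩
  · exact ⟨i, (hi.trans hm).le, max_eq_left hki, le_rfl⟩

theorem apply_le_apply_of_natDegree_eq (hφ : IsNonarchimedean φ)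
    (hφC : ∀ c : F, c ≠ 0 → ∀ x, φ (C c * x) = φ x) (ht0 : ∀ i, t i ≠ 0)
    (hdeg : ∀ m, ∃ i, (t i).natDegree = m) (hinj : Function.Injective (φ ∘ t))
    {x : F[X]} (hx : x ≠ 0) {i : ι} (hi : (t i).natDegree = x.natDegree) : φ (t i) ≤ φ x := by
  obtain ⟨k, -, hxk, hik⟩ := exists_apply_eq_apply_ge hφ hφC ht0 hdeg hinj hx hi
  exact hxk ▸ hik

theorem setOf_apply_lt_eq_span (hφ : IsNonarchimedean φ)
    (hφC : ∀ c : F, c ≠ 0 → ∀ x, φ (C c * x) = φ x) (ht0 : ∀ i, t i ≠ 0)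
    (hdeg : ∀ m, ∃ i, (t i).natDegree = m) (hinj : Function.Injective (φ ∘ t))
    {ε : ℝ} (h0 : φ 0 < ε) :
    {x | φ x < ε} = Submodule.span F (t '' {i | φ (t i) < ε}) := by
  ext x
  simp only [Set.mem_ofPred_eq, SetLike.mem_coe]
  constructor
  · intro hx
    induction hm : x.natDegree using Nat.strong_induction_on generalizing x with
    | _ m ih =>
    by_cases hx0 : x = 0
    · rw [hx0]; exact zero_mem _
    obtain ⟨i, hi⟩ := hdeg m
    obtain ⟨γ, hγ, hlt⟩ := exists_degree_sub_C_mul_lt hx0 (ht0 i) (hm.trans hi.symm)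
    have hti : φ (t i) < ε :=
      (apply_le_apply_of_natDegree_eq hφ hφC ht0 hdeg hinj hx0 (hi.trans hm.symm)).trans_lt hx
    have hmem : C γ * t i ∈ Submodule.span F (t '' {i | φ (t i) < ε}) := by
      rw [← smul_eq_C_mul]
      exact Submodule.smul_mem _ _ (Submodule.subset_span ⟨i, hti, rfl⟩)
    have hx' : φ (x - C γ * t i) < ε := by
      rw [sub_eq_add_neg]
      refine (hφ _ _).trans_lt (max_lt hx ?_)
      rwa [apply_neg_eq_of_apply_C_mul hφC, hφC γ hγ]
    rw [← sub_add_cancel x (C γ * t i)]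
    refine add_mem ?_ hmem
    by_cases hx'0 : x - C γ * t i = 0
    · rw [hx'0]; exact zero_mem _
    · exact ih _ (hm ▸ natDegree_lt_natDegree hx'0 hlt) _ hx' rfl
  · intro hx
    induction hx using Submodule.span_induction with
    | mem x hx => obtain ⟨i, hi, rfl⟩ := hx; exact hi
    | zero => exact h0
    | add x y _ _ hx hy => exact (hφ x y).trans_lt (max_lt hx hy)
    | smul γ x _ hx =>
      rcases eq_or_ne γ 0 with rfl | hγ
      · rwa [zero_smul]
      · rwa [smul_eq_C_mul, hφC γ hγ]

end AdaptedBasis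

section Pnorm

variable {Fq K : Type*} [Field Fq] [Field K] (ι : Fq[X] →+* K) (v : AbsoluteValue K ℝ)

theorem pnorm_le (x : K) (p : Fq[X]) : pnorm ι v x ≤ v (x - ι p) :=
  csInf_le ⟨0, by rintro _ ⟨p, rfl⟩; exact v.nonneg _⟩ ⟨p, rfl⟩

theorem le_pnorm {x : K} {r : ℝ} (h : ∀ p, r ≤ v (x - ι p)) : r ≤ pnorm ι v x :=
  le_csInf (Set.range_nonempty _) (by rintro _ ⟨p, rfl⟩; exact h p)

theorem pnorm_zero : pnorm ι v 0 = 0 :=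
  le_antisymm (by simpa using pnorm_le ι v 0 0) (le_pnorm ι v fun _ => v.nonneg _)

theorem isNonarchimedean_pnorm (hna : IsNonarchimedean v) : IsNonarchimedean (pnorm ι v) := by
  intro x y
  refine le_of_forall_pos_le_add fun ε hε => ?_
  obtain ⟨_, ⟨p, rfl⟩, hp⟩ :=
    Real.lt_sInf_add_pos (Set.range_nonempty fun p : Fq[X] => v (x - ι p)) hε
  obtain ⟨_, ⟨p', rfl⟩, hp'⟩ :=
    Real.lt_sInf_add_pos (Set.range_nonempty fun p : Fq[X] => v (y - ι p)) hε
  calc pnorm ι v (x + y) ≤ v ((x - ι p) + (y - ι p')) := by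
        simpa [add_sub_add_comm] using pnorm_le ι v (x + y) (p + p')
    _ ≤ max (v (x - ι p)) (v (y - ι p')) := hna _ _
    _ ≤ max (pnorm ι v x) (pnorm ι v y) + ε := by
        rw [← max_add_add_right]; exact max_le_max hp.le hp'.le

theorem pnorm_map_mul_le {u : Fq[X]} (hu : v (ι u) = 1) (x : K) :
    pnorm ι v (ι u * x) ≤ pnorm ι v x :=
  le_pnorm ι v fun p => (pnorm_le ι v _ (u * p)).trans_eq <| by
    rw [map_mul, ← mul_sub, map_mul, hu, one_mul]

theorem pnorm_C_mul (hvC : ∀ γ : Fq, γ ≠ 0 → v (ι (C γ)) = 1) {γ : Fq} (hγ : γ ≠ 0) (x : K) :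
    pnorm ι v (ι (C γ) * x) = pnorm ι v x := by
  refine le_antisymm (pnorm_map_mul_le ι v (hvC γ hγ) x) ?_
  calc pnorm ι v x = pnorm ι v (ι (C γ⁻¹) * (ι (C γ) * x)) := by
        rw [← mul_assoc, ← map_mul, ← C_mul, inv_mul_cancel₀ hγ, C_1, map_one, one_mul]
    _ ≤ pnorm ι v (ι (C γ) * x) := pnorm_map_mul_le ι v (hvC _ (inv_ne_zero hγ)) _

theorem pnorm_map_add (hna : IsNonarchimedean v) (hv1 : ∀ g : Fq[X], g ≠ 0 → 1 ≤ v (ι g))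
    (g : Fq[X]) {ξ : K} (hξ : v ξ < 1) : pnorm ι v (ι g + ξ) = v ξ := by
  refine le_antisymm (by simpa using pnorm_le ι v (ι g + ξ) g) (le_pnorm ι v fun p => ?_)
  rcases eq_or_ne g p with rfl | hgp
  · simp
  · have hlt : v ξ < v (ι (g - p)) := hξ.trans_le (hv1 _ (sub_ne_zero.2 hgp))
    rw [show ι g + ξ - ι p = ξ + ι (g - p) by rw [map_sub]; ring,
      hna.add_eq_right_of_lt hlt]
    exact hlt.le

theorem pnorm_map_mul_mul (hna : IsNonarchimedean v) (hv1 : ∀ g : Fq[X], g ≠ 0 → 1 ≤ v (ι g))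
    {u r p : Fq[X]} {f : K} (h : v (ι u) * v (ι p - ι r * f) < 1) :
    pnorm ι v (ι (u * r) * f) = v (ι u) * v (ι p - ι r * f) := by
  have hsplit : ι (u * r) * f = ι (u * p) + -(ι u * (ι p - ι r * f)) := by
    rw [map_mul, map_mul]; ring
  rw [hsplit, pnorm_map_add ι v hna hv1, v.map_neg, v.map_mul]
  rwa [v.map_neg, v.map_mul]

end Pnorm

theorem Lambda_eq_span {Fq K ι' : Type*} [Field Fq] [Field K] (ι : Fq[X] →+* K)
    (v : AbsoluteValue K ℝ) (hna : IsNonarchimedean v)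
    (hvC : ∀ γ : Fq, γ ≠ 0 → v (ι (C γ)) = 1) (f : K) {t : ι' → Fq[X]} (ht0 : ∀ i, t i ≠ 0)
    (hdeg : ∀ m, ∃ i, (t i).natDegree = m)
    (hinj : Function.Injective fun i => pnorm ι v (ι (t i) * f)) {ε : ℝ} (hε : 0 < ε) :
    Lambda ι v f ε = Submodule.span Fq (t '' {i | pnorm ι v (ι (t i) * f) < ε}) :=
  setOf_apply_lt_eq_span (φ := fun x => pnorm ι v (ι x * f))
    (fun x y => by simpa only [map_add, add_mul] using isNonarchimedean_pnorm ι v hna _ _)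
    (fun γ hγ x => by simp only [map_mul, mul_assoc, pnorm_C_mul ι v hvC hγ])
    ht0 hdeg hinj (by simpa [pnorm_zero] using hε)

theorem natDegree_eq_and_leadingCoeff_eq_of_rec {R : Type*} [CommRing R] [IsDomain R]
    {a : R[X]} {b : R} {Q : ℕ → R[X]} (ha : 0 < a.natDegree) (hQ0 : Q 0 = 1) (hQ1 : Q 1 = a)
    (hQrec : ∀ n, Q (n + 2) = a * Q (n + 1) + C b * Q n) (n : ℕ) :
    (Q n).natDegree = n * a.natDegree ∧ (Q n).leadingCoeff = a.leadingCoeff ^ n := by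
  induction n using Nat.twoStepInduction with
  | zero => simp [hQ0]
  | one => simp [hQ1]
  | more n ihn ihn1 =>
    have ha0 : a ≠ 0 := ne_zero_of_natDegree_gt ha
    have hQne : Q (n + 1) ≠ 0 := fun h =>
      pow_ne_zero _ (leadingCoeff_ne_zero.2 ha0) (by rw [← ihn1.2, h, leadingCoeff_zero])
    have hlt : (C b * Q n).natDegree < (a * Q (n + 1)).natDegree := by
      rw [natDegree_mul ha0 hQne, ihn1.1]
      refine (natDegree_C_mul_le _ _).trans_lt ?_
      rw [ihn.1]; nlinarith
    rw [hQrec, natDegree_add_eq_left_of_natDegree_lt hlt,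
      leadingCoeff_add_of_degree_lt' (degree_lt_degree hlt), natDegree_mul ha0 hQne,
      leadingCoeff_mul, ihn1.1, ihn1.2]
    constructor <;> ring

theorem sub_mul_eq_pow_of_rec {K : Type*} [Field K] {α β f : K} {P : ℕ → K} (hf : f ≠ 0)
    (hroot : f ^ 2 = α * f + β) (hP0 : P 0 = 1) (hP1 : P 1 = α)
    (hPrec : ∀ n, P (n + 2) = α * P (n + 1) + β * P n) (n : ℕ) :
    P (n + 1) - P n * f = (-β / f) ^ (n + 1) := by
  have hα : α - f = -β / f := by
    field_simp
    linear_combination -hroot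
  induction n with
  | zero => rw [hP1, hP0, one_mul, hα, zero_add, pow_one]
  | succ n ih =>
    rw [hPrec, pow_succ, ← ih, ← hα]
    linear_combination -P n * hroot

theorem abv_eq_of_sq_eq_mul_add {K : Type*} [Field K] {v : AbsoluteValue K ℝ}
    (hna : IsNonarchimedean v) {α β f : K} (hroot : f ^ 2 = α * f + β)
    (hβ : v β < v α * v f) : v f = v α := by
  have hf : v f ≠ 0 := fun h => by simp [h] at hβ; linarith [v.nonneg β]
  have : v f * v f = v α * v f := by
    rw [← map_mul, ← sq, hroot, add_comm, hna.add_eq_right_of_lt (by rwa [map_mul]), map_mul]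
  exact mul_right_cancel₀ hf this

theorem monic_C_pow_mul_of_rec {R : Type*} [CommRing R] [IsDomain R]
    {a : R[X]} {b c : R} {Q : ℕ → R[X]} (ha : 0 < a.natDegree) (hQ0 : Q 0 = 1) (hQ1 : Q 1 = a)
    (hQrec : ∀ n, Q (n + 2) = a * Q (n + 1) + C b * Q n) (hca : c * a.leadingCoeff = 1)
    (n : ℕ) : (C (c ^ n) * Q n).Monic := by
  rw [Monic, leadingCoeff_mul, leadingCoeff_C,
    (natDegree_eq_and_leadingCoeff_eq_of_rec ha hQ0 hQ1 hQrec n).2, ← mul_pow, hca, one_pow]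

theorem pnorm_X_pow_mul_C_pow_mul_of_rec {Fq K : Type*} [Field Fq] [Field K]
    (ι : Fq[X] →+* K) (v : AbsoluteValue K ℝ) (hna : IsNonarchimedean v) {q : ℝ} (hq : 1 < q)
    (hdeg : ∀ g : Fq[X], g ≠ 0 → v (ι g) = q ^ g.natDegree)
    {a : Fq[X]} {d : ℕ} (hda : a.natDegree = d) {b : Fq} (hb : b ≠ 0)
    {f : K} (hroot : f ^ 2 = ι a * f + ι (C b)) (hf : 1 < v f)
    {Q : ℕ → Fq[X]} (hQ0 : Q 0 = 1) (hQ1 : Q 1 = a)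
    (hQrec : ∀ n, Q (n + 2) = a * Q (n + 1) + C b * Q n) {c : Fq} (hc : c ≠ 0)
    (n : ℕ) {j : ℕ} (hj : j < d) :
    pnorm ι v (ι (X ^ j * (C (c ^ n) * Q n)) * f) = q ^ j / q ^ ((n + 1) * d) := by
  have hv1 : ∀ g : Fq[X], g ≠ 0 → 1 ≤ v (ι g) := fun g hg =>
    (hdeg g hg).symm ▸ one_le_pow₀ hq.le
  have hvb : v (ι (C b)) = 1 := by rw [hdeg _ (C_ne_zero.2 hb), natDegree_C, pow_zero]
  have hva : v (ι a) = q ^ d := by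
    rw [hdeg _ (ne_zero_of_natDegree_gt (show 0 < a.natDegree by omega)), hda]
  have hvf : v f = q ^ d := by
    rw [← hva]
    refine abv_eq_of_sq_eq_mul_add hna hroot ?_
    rw [hvb, hva]
    exact one_lt_mul_of_le_of_lt (one_le_pow₀ hq.le) hf
  have hf0 : f ≠ 0 := fun h => by simp [h] at hf; linarith
  have happrox : v (ι (Q (n + 1)) - ι (Q n) * f) = (q ^ ((n + 1) * d))⁻¹ := by
    rw [sub_mul_eq_pow_of_rec (P := fun n => ι (Q n)) hf0 hroot (by simp [hQ0]) (by simp [hQ1])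
      (fun n => by simp [hQrec]) n, map_pow, map_div₀, v.map_neg, hvb, hvf, one_div, inv_pow,
      ← pow_mul, mul_comm]
  have hu : v (ι (X ^ j * C (c ^ n))) = q ^ j := by
    rw [hdeg _ (mul_ne_zero (pow_ne_zero _ X_ne_zero) (C_ne_zero.2 (pow_ne_zero _ hc))),
      natDegree_mul_C (pow_ne_zero _ hc), natDegree_X_pow]
  have hsmall : q ^ j * (q ^ ((n + 1) * d))⁻¹ < 1 := by
    rw [← div_eq_mul_inv, div_lt_one (by positivity)]
    exact pow_lt_pow_right₀ hq (hj.trans_le (Nat.le_mul_of_pos_left d n.succ_pos))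
  rw [← mul_assoc, pnorm_map_mul_mul ι v hna hv1 (by rwa [hu, happrox]), hu, happrox,
    div_eq_mul_inv]

theorem injective_pow_div_pow {q : ℝ} (hq : 1 < q) {d : ℕ} :
    Function.Injective fun i : ℕ × Fin d => q ^ (i.2 : ℕ) / q ^ ((i.1 + 1) * d) := by
  rintro ⟨n₁, j₁, hj₁⟩ ⟨n₂, j₂, hj₂⟩ h
  have hq0 : q ≠ 0 := by positivity
  simp only [div_eq_div_iff (pow_ne_zero _ hq0) (pow_ne_zero _ hq0), ← pow_add] at h
  have h' := pow_right_injective₀ (by positivity) hq.ne' h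
  have hj : j₁ = j₂ := by
    simpa [Nat.add_mul_mod_self_right, Nat.mod_eq_of_lt hj₁, Nat.mod_eq_of_lt hj₂] using
      congrArg (· % d) h'
  subst hj
  have hn := Nat.eq_of_mul_eq_mul_right (by omega) (Nat.add_left_cancel h')
  obtain rfl : n₁ = n₂ := by omega
  rfl

theorem pow_div_pow_lt_inv_pow_iff {q : ℝ} (hq : 1 < q) {d j l n N : ℕ} (hj : j < d)
    (hl : l < d) : q ^ j / q ^ ((n + 1) * d) < (q ^ (N * d + l))⁻¹ ↔ n = N ∧ j + l < d ∨ N < n := by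
  rw [← one_div, div_lt_div_iff₀ (by positivity) (by positivity), one_mul, ← pow_add,
    pow_lt_pow_iff_right₀ hq]
  rcases lt_trichotomy n N with h | rfl | h
  · have := Nat.mul_le_mul_right d (show n + 1 ≤ N by omega)
    omega
  · rw [add_one_mul]; omega
  · have := Nat.mul_le_mul_right d (show N + 2 ≤ n + 1 by omega)
    rw [add_mul] at this
    omega

theorem image_setOf_pow_div_pow_lt {R : Type*} [Semiring R] (P : ℕ → R[X]) {q : ℝ} (hq : 1 < q)
    {d l : ℕ} (hl : l < d) (N : ℕ) :
    (fun i : ℕ × Fin d => X ^ (i.2 : ℕ) * P i.1) ''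
        {i | q ^ (i.2 : ℕ) / q ^ ((i.1 + 1) * d) < (q ^ (N * d + l))⁻¹} =
      {x | ∃ j ≤ d - 1 - l, x = X ^ j * P N} ∪ {x | ∃ j ≤ d - 1, ∃ n ≥ N + 1, x = X ^ j * P n} := by
  ext x
  constructor
  · rintro ⟨⟨n, j, hj⟩, hlt, rfl⟩
    rw [Set.mem_ofPred_eq, pow_div_pow_lt_inv_pow_iff hq hj hl] at hlt
    rcases hlt with ⟨rfl, hjl⟩ | hNn
    · exact Or.inl ⟨j, by omega, rfl⟩
    · exact Or.inr ⟨j, by omega, n, hNn, rfl⟩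
  · rintro (⟨j, hj, rfl⟩ | ⟨j, hj, n, hn, rfl⟩)
    · refine ⟨(N, ⟨j, by omega⟩), ?_, rfl⟩
      rw [Set.mem_ofPred_eq, pow_div_pow_lt_inv_pow_iff hq (by omega) hl]
      dsimp only
      omega
    · refine ⟨(n, ⟨j, by omega⟩), ?_, rfl⟩
      rw [Set.mem_ofPred_eq, pow_div_pow_lt_inv_pow_iff hq (by omega) hl]
      dsimp only
      omega

theorem stmt_7_general {Fq K : Type*} [Field Fq] [Fintype Fq] [Field K]
    (ι : Polynomial Fq →+* K) (v : AbsoluteValue K ℝ)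
    (hna : ∀ x y : K, v (x + y) ≤ max (v x) (v y))
    (hdeg : ∀ g : Polynomial Fq, g ≠ 0 → v (ι g) = (Fintype.card Fq : ℝ) ^ g.natDegree)
    (a : Polynomial Fq) (d : ℕ) (hda : a.natDegree = d) (hd : 0 < d)
    (b : Fq) (hb : b ≠ 0)
    (f : K) (hroot : f ^ 2 = ι a * f + ι (C b)) (hf : 1 < v f)
    (Q : ℕ → Polynomial Fq) (hQ0 : Q 0 = 1) (hQ1 : Q 1 = a)
    (hQrec : ∀ n, Q (n + 2) = a * Q (n + 1) + C b * Q n)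
    (c : Fq) (hca : (C c * a).Monic)
    (Qbar : ℕ → Polynomial Fq) (hQbar : ∀ n, Qbar n = C (c ^ n) * Q n)
    (l : ℕ) (hl : l ≤ d - 1) (N : ℕ) :
    Lambda ι v f (((Fintype.card Fq : ℝ) ^ (N * d + l))⁻¹) =
      ↑(Submodule.span Fq
        ({ x : Polynomial Fq | ∃ j ≤ d - 1 - l, x = X ^ j * Qbar N } ∪
         { x : Polynomial Fq | ∃ j ≤ d - 1, ∃ n ≥ N + 1, x = X ^ j * Qbar n })) := by
  set q : ℝ := (Fintype.card Fq : ℝ)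
  have hq : 1 < q := Nat.one_lt_cast.2 Fintype.one_lt_card
  have hlc : c * a.leadingCoeff = 1 := by simpa [Monic, leadingCoeff_mul] using hca
  have hc : c ≠ 0 := left_ne_zero_of_mul_eq_one hlc
  have ha : 0 < a.natDegree := hda ▸ hd
  have hmonic : ∀ n, (Qbar n).Monic := fun n =>
    hQbar n ▸ monic_C_pow_mul_of_rec ha hQ0 hQ1 hQrec hlc n
  have hnatDeg : ∀ n, (Qbar n).natDegree = n * d := fun n => by
    rw [hQbar, natDegree_C_mul (pow_ne_zero _ hc),
      (natDegree_eq_and_leadingCoeff_eq_of_rec ha hQ0 hQ1 hQrec n).1, hda]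
  have htdeg (m : ℕ) : ∃ i : ℕ × Fin d, (X ^ (i.2 : ℕ) * Qbar i.1).natDegree = m :=
    ⟨(m / d, ⟨m % d, Nat.mod_lt m hd⟩), by
      simp [natDegree_mul (pow_ne_zero _ X_ne_zero) (hmonic _).ne_zero, hnatDeg, Nat.mod_add_div']⟩
  have hφt (n : ℕ) (j : Fin d) :
      pnorm ι v (ι (X ^ (j : ℕ) * Qbar n) * f) = q ^ (j : ℕ) / q ^ ((n + 1) * d) := by
    rw [hQbar]
    exact pnorm_X_pow_mul_C_pow_mul_of_rec ι v hna hq hdeg hda hb hroot hf hQ0 hQ1 hQrec hc n j.2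
  have hinj : Function.Injective fun i : ℕ × Fin d =>
      pnorm ι v (ι (X ^ (i.2 : ℕ) * Qbar i.1) * f) := by
    simp only [hφt]
    exact injective_pow_div_pow hq
  have hvC : ∀ γ : Fq, γ ≠ 0 → v (ι (C γ)) = 1 := fun γ hγ => by
    rw [hdeg _ (C_ne_zero.2 hγ), natDegree_C, pow_zero]
  rw [Lambda_eq_span ι v hna hvC f (t := fun i : ℕ × Fin d => X ^ (i.2 : ℕ) * Qbar i.1)
    (fun i => ((monic_X_pow _).mul (hmonic i.1)).ne_zero) htdeg hinj (by positivity)]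
  simp only [hφt]
  rw [image_setOf_pow_div_pow_lt Qbar hq (by omega) N]

/-- For `0 ≤ l ≤ d-1`, `d_l = d-1-l`, and `N ≥ 0`, the space
`Λ_{q^{-Nd-l}}(f)` is precisely the `F_q`-span of
`{ T^j Q̄_N : 0 ≤ j ≤ d_l } ∪ { T^j Q̄_n : 0 ≤ j ≤ d-1, n ≥ N+1 }`. -/
theorem stmt_7 {Fq K : Type*} [Field Fq] [Fintype Fq] [Field K]
    (ι : Polynomial Fq →+* K) (v : AbsoluteValue K ℝ)
    (hna : ∀ x y : K, v (x + y) ≤ max (v x) (v y))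
    (hdeg : ∀ g : Polynomial Fq, g ≠ 0 → v (ι g) = (Fintype.card Fq : ℝ) ^ g.natDegree)
    (a : Polynomial Fq) (d : ℕ) (hda : a.natDegree = d) (hd : 0 < d)
    (b : Fq) (hb : b ≠ 0)
    (f : K) (hroot : f ^ 2 = ι a * f + ι (C b)) (hf : 1 < v f)
    (Q : ℕ → Polynomial Fq) (hQ0 : Q 0 = 1) (hQ1 : Q 1 = a)
    (hQrec : ∀ n, Q (n + 2) = a * Q (n + 1) + C b * Q n)
    (c : Fq) (hc : c ≠ 0) (hca : (C c * a).Monic)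
    (Qbar : ℕ → Polynomial Fq) (hQbar : ∀ n, Qbar n = C (c ^ n) * Q n)
    (l : ℕ) (hl : l ≤ d - 1) (N : ℕ) :
    Lambda ι v f (((Fintype.card Fq : ℝ) ^ (N * d + l))⁻¹) =
      ↑(Submodule.span Fq
        ({ x : Polynomial Fq | ∃ j ≤ d - 1 - l, x = X ^ j * Qbar N } ∪
         { x : Polynomial Fq | ∃ j ≤ d - 1, ∃ n ≥ N + 1, x = X ^ j * Qbar n })) :=
  stmt_7_general ι v hna hdeg a d hda hd b hb f hroot hf Q hQ0 hQ1 hQrec c hca Qbar hQbar l hl N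
end

section
/- Every nonzero λ ∈ Λ_{q^{−Nd−l}}(f) has a unique expansion λ = Σ_{i=0}^{m} c_i(T)·Q̄_{N+i} with c_i(T) ∈ F_q[T], deg c_i ≤ d−1 for all i, deg c_0 ≤ d−1−l, and c_m ≠ 0. -/
open Polynomial

/-!
Let `g = a - f` be the conjugate root, so `f g = -b`; as `|f| = |a| = q^d`, `|g| = q^{-d}`.
The recurrence gives `Q_n f = Q_{n+1} - g^{n+1}`. Writing `λ = ∑ c_n Q̄_n` in the base `(Q̄_n)`
(monic of degree `n d`, digits of degree `< d`), `λ f` is a polynomial minus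
`∑ c_n c^n g^{n+1}`, whose nonzero terms have the distinct sizes `q^{deg c_n - (n+1) d}`. So
`‖λ f‖` is the size of the term at the first nonzero digit, and `‖λ f‖ < q^{-N d - l}` forces the
digits below `N` to vanish and `deg c_N < d - l`. Uniqueness is that of the base-`(Q̄_n)`
expansion.
-/

open Finset

theorem succ_eq_mul_add_pow_of_recurrence {R : Type*} [CommRing R] {x : ℕ → R} {α β f g : R}
    (h0 : x 0 = 1) (h1 : x 1 = α) (hrec : ∀ n, x (n + 2) = α * x (n + 1) + β * x n)
    (hadd : f + g = α) (hmul : f * g = -β) (n : ℕ) :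
    x (n + 1) = x n * f + g ^ (n + 1) := by
  induction n with
  | zero => rw [h1, h0]; linear_combination -hadd
  | succ n ih =>
    rw [hrec, ih]
    linear_combination x n * hmul - x n * f * hadd - g ^ (n + 1) * hadd

theorem monic_and_natDegree_of_recurrence {R : Type*} [CommRing R] [Nontrivial R]
    {x : ℕ → R[X]} {A : R[X]} {β : R} {d : ℕ} (hA : A.Monic) (hAd : A.natDegree = d)
    (hd : 0 < d) (h0 : x 0 = 1) (h1 : x 1 = A)
    (hrec : ∀ n, x (n + 2) = A * x (n + 1) + C β * x n) (n : ℕ) :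
    (x n).Monic ∧ (x n).natDegree = n * d := by
  suffices ∀ n, ((x n).Monic ∧ (x n).natDegree = n * d) ∧
      ((x (n + 1)).Monic ∧ (x (n + 1)).natDegree = (n + 1) * d) from (this n).1
  intro n
  induction n with
  | zero => simp [h0, h1, hA, hAd]
  | succ n ih =>
    obtain ⟨⟨hm₀, hd₀⟩, hm₁, hd₁⟩ := ih
    have hlead : (A * x (n + 1)).natDegree = (n + 2) * d := by
      rw [hA.natDegree_mul hm₁, hAd, hd₁]; ring
    have hlt : (C β * x n).degree < (A * x (n + 1)).degree := by
      calc (C β * x n).degree ≤ (x n).degree := by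
            rw [← smul_eq_C_mul]; exact degree_smul_le _ _
        _ ≤ ↑(n * d) := hd₀ ▸ degree_le_natDegree
        _ < ↑((n + 2) * d) := by exact_mod_cast Nat.mul_lt_mul_of_pos_right (by omega) hd
        _ = (A * x (n + 1)).degree := by rw [degree_eq_natDegree (hA.mul hm₁).ne_zero, hlead]
    refine ⟨⟨hm₁, hd₁⟩, ?_, ?_⟩ <;> rw [hrec]
    · exact (hA.mul hm₁).add_of_left hlt
    · rw [natDegree_add_eq_left_of_degree_lt hlt, hlead]

section Digits

variable {R : Type*} [CommRing R] {B : ℕ → R[X]} {d : ℕ}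

theorem natDegree_mul_basis (hB : ∀ n, (B n).Monic ∧ (B n).natDegree = n * d)
    {u : R[X]} (hu : u ≠ 0) (n : ℕ) : (u * B n).natDegree = u.natDegree + n * d := by
  rw [← (hB n).1.natDegree_mul_comm, (hB n).1.natDegree_mul' hu, (hB n).2, add_comm]

theorem degree_mul_basis_lt [Nontrivial R]
    (hB : ∀ n, (B n).Monic ∧ (B n).natDegree = n * d) {u : R[X]} (hu : u.degree < d) (n : ℕ) :
    (u * B n).degree < ↑((n + 1) * d) := by
  rcases eq_or_ne u 0 with rfl | hu0
  · rw [zero_mul, degree_zero]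
    exact WithBot.bot_lt_coe _
  rw [degree_eq_natDegree ((hB n).1.mul_left_ne_zero hu0), natDegree_mul_basis hB hu0,
    Nat.cast_lt]
  have := (natDegree_lt_iff_degree_lt hu0).mpr hu
  linarith

theorem degree_sum_range_mul_lt [Nontrivial R]
    (hB : ∀ n, (B n).Monic ∧ (B n).natDegree = n * d) {c : ℕ → R[X]}
    (hc : ∀ n, (c n).degree < d) (M : ℕ) :
    (∑ n ∈ range M, c n * B n).degree < ↑(M * d) := by
  refine (degree_sum_le _ _).trans_lt
    ((Finset.sup_lt_iff (WithBot.bot_lt_coe _)).mpr fun n hn => ?_)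
  refine (degree_mul_basis_lt hB (hc n) n).trans_le ?_
  exact_mod_cast Nat.mul_le_mul_right d (mem_range.mp hn)

theorem eq_zero_of_sum_range_mul_eq_zero [Nontrivial R]
    (hB : ∀ n, (B n).Monic ∧ (B n).natDegree = n * d) {c : ℕ → R[X]}
    (hc : ∀ n, (c n).degree < d) {M : ℕ} (hsum : ∑ n ∈ range M, c n * B n = 0) :
    ∀ n < M, c n = 0 := by
  induction M with
  | zero => simp
  | succ M ih =>
    rw [sum_range_succ] at hsum
    have htop : c M = 0 := by
      by_contra hM
      have hlt : (∑ n ∈ range M, c n * B n).degree < (c M * B M).degree := by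
        refine (degree_sum_range_mul_lt hB hc M).trans_le ?_
        rw [degree_eq_natDegree ((hB M).1.mul_left_ne_zero hM), natDegree_mul_basis hB hM]
        exact_mod_cast Nat.le_add_left _ _
      rw [← degree_add_eq_right_of_degree_lt hlt, hsum, degree_zero] at hlt
      exact not_lt_bot hlt
    rw [htop, zero_mul, add_zero] at hsum
    intro n hn
    rcases Nat.lt_succ_iff_lt_or_eq.mp hn with hn | rfl
    exacts [ih hsum n hn, htop]

theorem exists_digits [Nontrivial R] (hB : ∀ n, (B n).Monic ∧ (B n).natDegree = n * d)
    (M : ℕ) {p : R[X]} (hp : p.degree < ↑(M * d)) :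
    ∃ c : ℕ → R[X], (∀ n, (c n).degree < d) ∧ (∀ n, M ≤ n → c n = 0) ∧
      p = ∑ n ∈ range M, c n * B n := by
  induction M generalizing p with
  | zero =>
    refine ⟨0, by simp, by simp, ?_⟩
    simpa using hp
  | succ M ih =>
    have hBM : (B M).degree = ↑(M * d) := by
      rw [degree_eq_natDegree (hB M).1.ne_zero, (hB M).2]
    obtain ⟨c, hc, hcM, hsum⟩ := ih (p := p %ₘ B M) (hBM ▸ degree_modByMonic_lt p (hB M).1)
    have hquot : (p /ₘ B M).degree < d := by
      rcases eq_or_ne (p /ₘ B M) 0 with h | h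
      · rw [h, degree_zero]
        exact WithBot.bot_lt_coe _
      have hp0 : p ≠ 0 := by rintro rfl; exact h (zero_divByMonic _)
      have hpd := (natDegree_lt_iff_degree_lt hp0).mpr hp
      rw [degree_eq_natDegree h, Nat.cast_lt, natDegree_divByMonic _ (hB M).1, (hB M).2]
      rcases Nat.eq_zero_or_pos d with rfl | hd
      · simp at hpd
      rw [add_mul, one_mul] at hpd
      omega
    refine ⟨Function.update c M (p /ₘ B M), fun n => ?_, fun n hn => ?_, ?_⟩
    · rcases eq_or_ne n M with rfl | hn
      · simpa using hquot
      · simpa [hn] using hc n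
    · rw [Function.update_of_ne (by omega)]
      exact hcM n (by omega)
    · rw [sum_range_succ, Function.update_self]
      rw [sum_congr rfl fun n hn => by rw [Function.update_of_ne (mem_range.mp hn).ne], ← hsum,
        mul_comm]
      exact (modByMonic_add_div p _).symm

theorem digits_unique [Nontrivial R] (hB : ∀ n, (B n).Monic ∧ (B n).natDegree = n * d)
    {c e : ℕ → R[X]} (hc : ∀ n, (c n).degree < d) (he : ∀ n, (e n).degree < d) {M : ℕ}
    (hcM : ∀ n, M ≤ n → c n = 0) (heM : ∀ n, M ≤ n → e n = 0)
    (h : ∑ n ∈ range M, c n * B n = ∑ n ∈ range M, e n * B n) : c = e := by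
  have hsub : ∀ n < M, c n - e n = 0 := by
    refine eq_zero_of_sum_range_mul_eq_zero hB
      (fun n => (degree_sub_le _ _).trans_lt (max_lt (hc n) (he n))) ?_
    simp only [sub_mul, sum_sub_distrib, h, sub_self]
  funext n
  by_cases hn : n < M
  · exact sub_eq_zero.mp (hsub n hn)
  · rw [hcM n (by omega), heM n (by omega)]

end Digits

section ShiftedDigits

variable {α : Type*} {N : ℕ}

/-- The digit sequence, in a base `B`, of `∑ i, p.2 i * B (N + i)`. -/
def shiftedDigits [Zero α] (N : ℕ) (p : Σ m : ℕ, Fin (m + 1) → α) (n : ℕ) : α :=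
  if h : N ≤ n ∧ n - N < p.1 + 1 then p.2 ⟨n - N, h.2⟩ else 0

@[simp]
theorem shiftedDigits_add [Zero α] (p : Σ m : ℕ, Fin (m + 1) → α) (i : Fin (p.1 + 1)) :
    shiftedDigits N p (N + i) = p.2 i := by
  simp [shiftedDigits, Nat.le_of_lt_succ i.isLt]

theorem shiftedDigits_eq_zero [Zero α] {p : Σ m : ℕ, Fin (m + 1) → α} {n : ℕ}
    (h : n < N ∨ N + p.1 < n) : shiftedDigits N p n = 0 :=
  dif_neg (by omega)

theorem sum_mul_eq_sum_range_shiftedDigits [Semiring α] (B : ℕ → α)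
    (p : Σ m : ℕ, Fin (m + 1) → α) {M : ℕ} (hM : N + p.1 < M) :
    ∑ i, p.2 i * B (N + i) = ∑ n ∈ range M, shiftedDigits N p n * B n := by
  calc ∑ i, p.2 i * B (N + i)
      = ∑ k ∈ range (p.1 + 1), shiftedDigits N p (N + k) * B (N + k) := by
        simp [← Fin.sum_univ_eq_sum_range]
    _ = ∑ n ∈ Ico N (N + (p.1 + 1)), shiftedDigits N p n * B n := by
        rw [sum_Ico_eq_sum_range, Nat.add_sub_cancel_left]
    _ = ∑ n ∈ range M, shiftedDigits N p n * B n := by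
        refine sum_subset (fun n hn => ?_) fun n _ hn => ?_
        · simp only [mem_Ico, mem_range] at hn ⊢
          omega
        · rw [shiftedDigits_eq_zero (by simp only [mem_Ico] at hn; omega), zero_mul]

theorem eq_of_shiftedDigits_eq [Zero α] {p p' : Σ m : ℕ, Fin (m + 1) → α}
    (hp : p.2 (Fin.last p.1) ≠ 0) (hp' : p'.2 (Fin.last p'.1) ≠ 0)
    (h : shiftedDigits N p = shiftedDigits N p') : p = p' := by
  have hle : ∀ {p p' : Σ m : ℕ, Fin (m + 1) → α}, p.2 (Fin.last p.1) ≠ 0 →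
      shiftedDigits N p = shiftedDigits N p' → p.1 ≤ p'.1 := fun {p p'} hp h => by
    by_contra! hlt
    apply hp
    rw [← shiftedDigits_add (N := N), h, Fin.val_last, shiftedDigits_eq_zero (by omega)]
  obtain ⟨m, u⟩ := p
  obtain ⟨m', u'⟩ := p'
  obtain rfl : m = m' := le_antisymm (hle hp h) (hle hp' h.symm)
  congr 1
  funext i
  simpa using congrFun h (N + i)

theorem exists_shiftedDigits_eq [Zero α] {c : ℕ → α} {M : ℕ} (hlow : ∀ n < N, c n = 0)
    (hhigh : ∀ n, M ≤ n → c n = 0) (hne : ∃ n, c n ≠ 0) :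
    ∃ p : Σ m : ℕ, Fin (m + 1) → α, p.2 (Fin.last p.1) ≠ 0 ∧ shiftedDigits N p = c := by
  classical
  obtain ⟨n, hn⟩ := hne
  set k := Nat.findGreatest (fun n => c n ≠ 0) M
  have hk : c k ≠ 0 := Nat.findGreatest_spec (P := fun n => c n ≠ 0)
    (le_of_not_ge fun h => hn (hhigh n h)) hn
  have habove : ∀ n, k < n → c n = 0 := fun n hkn => by
    by_cases hnM : n ≤ M
    · simpa using Nat.findGreatest_is_greatest hkn hnM
    · exact hhigh n (by omega)
  have hNk : N ≤ k := le_of_not_gt fun h => hk (hlow k h)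
  refine ⟨⟨k - N, fun i => c (N + i)⟩, by simpa [Nat.add_sub_cancel' hNk] using hk, ?_⟩
  funext n
  unfold shiftedDigits
  split_ifs with h
  · dsimp only
    congr 1
    omega
  · dsimp only at h
    rcases not_and_or.mp h with h | h
    · exact (hlow n (by omega)).symm
    · exact (habove n (by omega)).symm

end ShiftedDigits

theorem existsUnique_expansion {R : Type*} [CommRing R] [Nontrivial R] {B : ℕ → R[X]}
    {d : ℕ} (hB : ∀ n, (B n).Monic ∧ (B n).natDegree = n * d)
    {c : ℕ → R[X]} (hc : ∀ n, (c n).degree < d) {M N : ℕ} (hcM : ∀ n, M ≤ n → c n = 0)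
    (hcN : ∀ n < N, c n = 0) {lam : R[X]} (hlam0 : lam ≠ 0)
    (hlam : lam = ∑ n ∈ range M, c n * B n) {P : R[X] → Prop} (hP : P (c N)) :
    ∃! p : Σ m : ℕ, Fin (m + 1) → R[X], (∀ i, (p.2 i).degree < d) ∧ P (p.2 0) ∧
      p.2 (Fin.last p.1) ≠ 0 ∧ lam = ∑ i, p.2 i * B (N + i) := by
  have hne : ∃ n, c n ≠ 0 := by
    by_contra! h
    exact hlam0 (by simp [hlam, h])
  obtain ⟨p, hlast, hp⟩ := exists_shiftedDigits_eq hcN hcM hne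
  have hdigit : ∀ i, p.2 i = c (N + i) := fun i => by rw [← hp, shiftedDigits_add]
  have hpM : N + p.1 < M := by
    by_contra! h
    exact hlast (by rw [hdigit, Fin.val_last, hcM _ h])
  refine ⟨p, ⟨fun i => hdigit i ▸ hc _, by simpa [hdigit] using hP, hlast, ?_⟩, ?_⟩
  · rw [sum_mul_eq_sum_range_shiftedDigits B p hpM, hp, hlam]
  rintro p' ⟨hdeg', -, hlast', hsum'⟩
  set M' := M + N + p'.1 + 1
  have hdigits : shiftedDigits N p' = c := by
    refine digits_unique hB (M := M') (fun n => ?_) hc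
      (fun n hn => shiftedDigits_eq_zero (by omega)) (fun n hn => hcM n (by omega)) ?_
    · unfold shiftedDigits
      split_ifs
      · exact hdeg' _
      · rw [degree_zero]
        exact WithBot.bot_lt_coe d
    · rw [← sum_mul_eq_sum_range_shiftedDigits B p' (by omega), ← hsum', hlam,
        eventually_constant_sum (fun n hn => by rw [hcM n hn, zero_mul]) (by omega : M ≤ M')]
  exact eq_of_shiftedDigits_eq hlast' hlast (hdigits.trans hp.symm)

theorem AbsoluteValue.map_sub_root_eq_inv {K : Type*} [Field K] {v : AbsoluteValue K ℝ}
    (hna : IsNonarchimedean v) {α β f : K} (hroot : f ^ 2 = α * f + β) (hβ : v β = 1)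
    (hα : 1 ≤ v α) (hf : 1 < v f) : v (α - f) = (v α)⁻¹ := by
  have hf0 : v f ≠ 0 := by positivity
  have hvf : v f = v α := by
    have hlt : v β < v (α * f) := by
      rw [hβ, v.map_mul]
      nlinarith
    have h := congrArg v hroot
    rw [hna.add_eq_left_of_lt hlt, v.map_pow, v.map_mul, sq] at h
    exact mul_right_cancel₀ hf0 h
  have hprod : f * (α - f) = -β := by linear_combination -hroot
  have h := congrArg v hprod
  rw [v.map_mul, v.map_neg, hβ, hvf] at h
  exact eq_inv_of_mul_eq_one_right h

section Analytic

variable {Fq K : Type*} [Field Fq] [Field K] {ι : Fq[X] →+* K} {v : AbsoluteValue K ℝ}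

theorem pnorm_sub_eq (hna : IsNonarchimedean v) (hι : ∀ g, g ≠ 0 → 1 ≤ v (ι g))
    (p : Fq[X]) {r : K} (hr : v r < 1) : pnorm ι v (ι p - r) = v r := by
  have hp : v (ι p - r - ι p) = v r := by rw [sub_sub_cancel_left, v.map_neg]
  refine le_antisymm (csInf_le ⟨0, by rintro _ ⟨p', rfl⟩; positivity⟩ ⟨p, hp⟩) ?_
  refine le_csInf ⟨_, p, rfl⟩ ?_
  rintro _ ⟨p', rfl⟩
  rcases eq_or_ne p' p with rfl | hne
  · exact hp.ge
  have hbig : 1 ≤ v (ι (p - p')) := hι _ (sub_ne_zero.mpr hne.symm)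
  have hlt : v (-r) < v (ι (p - p')) := by rw [v.map_neg]; linarith
  calc v r ≤ v (ι (p - p')) := by linarith
    _ = v (ι p - r - ι p') := by
      rw [← hna.add_eq_left_of_lt hlt, map_sub]; ring_nf

variable [Fintype Fq] {d : ℕ} {B P : ℕ → Fq[X]} {E : ℕ → K} {f : K}

local notation "q" => (Fintype.card Fq : ℝ)

theorem map_mul_error_eq_zpow (hdeg : ∀ g : Fq[X], g ≠ 0 → v (ι g) = q ^ g.natDegree)
    (hE : ∀ n, v (E n) = (q ^ d)⁻¹ ^ (n + 1)) {u : Fq[X]} (hu : u ≠ 0) (n : ℕ) :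
    v (ι u * E n) = q ^ ((u.natDegree : ℤ) - ((n + 1) * d : ℕ)) := by
  rw [v.map_mul, hdeg u hu, hE, inv_pow, ← pow_mul, zpow_sub₀ (by positivity), zpow_natCast,
    zpow_natCast, div_eq_mul_inv, mul_comm d]

theorem pnorm_sum_digits_mul_eq (hna : IsNonarchimedean v)
    (hdeg : ∀ g : Fq[X], g ≠ 0 → v (ι g) = q ^ g.natDegree)
    (happrox : ∀ n, ι (B n) * f = ι (P n) - E n) (hE : ∀ n, v (E n) = (q ^ d)⁻¹ ^ (n + 1))
    {c : ℕ → Fq[X]} (hc : ∀ n, (c n).degree < d) {M : ℕ} (hcM : ∀ n, M ≤ n → c n = 0)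
    {k : ℕ} (hk : c k ≠ 0) (hbelow : ∀ n < k, c n = 0) :
    pnorm ι v (ι (∑ n ∈ range M, c n * B n) * f) =
      q ^ (((c k).natDegree : ℤ) - ((k + 1) * d : ℕ)) := by
  have hq : 1 < q := Nat.one_lt_cast.mpr Fintype.one_lt_card
  have hnatDeg : ∀ n, c n ≠ 0 → (c n).natDegree < d := fun n hn =>
    (natDegree_lt_iff_degree_lt hn).mpr (hc n)
  have hkM : k < M := lt_of_not_ge fun h => hk (hcM k h)
  have hfact : ι (∑ n ∈ range M, c n * B n) * f =
      ι (∑ n ∈ range M, c n * P n) - ∑ n ∈ range M, ι (c n) * E n := by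
    simp only [map_sum, map_mul, sum_mul, mul_assoc, happrox, mul_sub, sum_sub_distrib]
  have hdom : ∀ j ∈ range M, j ≠ k → v (ι (c j) * E j) < v (ι (c k) * E k) := by
    intro j _ hjk
    rw [map_mul_error_eq_zpow hdeg hE hk]
    rcases eq_or_ne (c j) 0 with hj | hj
    · rw [hj, map_zero, zero_mul, v.map_zero]
      positivity
    rw [map_mul_error_eq_zpow hdeg hE hj, zpow_lt_zpow_iff_right₀ hq]
    have hkj : k + 1 + 1 ≤ j + 1 := by
      have := lt_of_le_of_ne (not_lt.mp fun h => hj (hbelow j h)) hjk.symm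
      omega
    have := Nat.mul_le_mul_right d hkj
    have := hnatDeg j hj
    push_cast at *
    nlinarith
  have hsum : v (∑ n ∈ range M, ι (c n) * E n) =
      q ^ (((c k).natDegree : ℤ) - ((k + 1) * d : ℕ)) := by
    rw [hna.apply_sum_eq_of_lt (fun x => (v.map_neg x).symm) (mem_range.mpr hkM) hdom,
      map_mul_error_eq_zpow hdeg hE hk]
  have hsmall : v (∑ n ∈ range M, ι (c n) * E n) < 1 := by
    rw [hsum]
    refine zpow_lt_one_of_neg₀ hq ?_
    have := hnatDeg k hk
    push_cast
    nlinarith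
  rw [hfact, pnorm_sub_eq hna (fun g hg => hdeg g hg ▸ one_le_pow₀ hq.le) _ hsmall, hsum]

theorem digits_vanish_of_mem_Lambda (hna : IsNonarchimedean v)
    (hdeg : ∀ g : Fq[X], g ≠ 0 → v (ι g) = q ^ g.natDegree)
    (happrox : ∀ n, ι (B n) * f = ι (P n) - E n) (hE : ∀ n, v (E n) = (q ^ d)⁻¹ ^ (n + 1))
    {c : ℕ → Fq[X]} (hc : ∀ n, (c n).degree < d) {M : ℕ} (hcM : ∀ n, M ≤ n → c n = 0)
    {lam : Fq[X]} (hlam0 : lam ≠ 0) (hlam : lam = ∑ n ∈ range M, c n * B n) {N l : ℕ}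
    (hmem : lam ∈ Lambda ι v f ((q ^ (N * d + l))⁻¹)) :
    (∀ n < N, c n = 0) ∧ (c N).degree < ↑(d - l) := by
  classical
  have hne : ∃ n, c n ≠ 0 := by
    by_contra! h
    exact hlam0 (by simp [hlam, h])
  obtain ⟨k, hk, hbelow⟩ : ∃ k, c k ≠ 0 ∧ ∀ n < k, c n = 0 :=
    ⟨Nat.find hne, Nat.find_spec hne, fun n hn => not_not.mp (Nat.find_min hne hn)⟩
  have hlt := hmem
  rw [Lambda, Set.mem_ofPred_eq, hlam,
    pnorm_sum_digits_mul_eq hna hdeg happrox hE hc hcM hk hbelow, ← zpow_natCast, ← zpow_neg,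
    zpow_lt_zpow_iff_right₀ (Nat.one_lt_cast.mpr Fintype.one_lt_card)] at hlt
  have hkey : (c k).natDegree + N * d + l < (k + 1) * d := by
    push_cast at hlt
    zify
    linarith
  have hNk : N ≤ k := by
    by_contra! h
    have : (k + 1) * d ≤ N * d := Nat.mul_le_mul_right d h
    omega
  refine ⟨fun n hn => hbelow n (by omega), ?_⟩
  rcases eq_or_ne (c N) 0 with h | h
  · rw [h, degree_zero]
    exact WithBot.bot_lt_coe _
  obtain rfl : k = N := le_antisymm (not_lt.mp fun hNk' => h (hbelow N hNk')) hNk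
  rw [degree_eq_natDegree h, Nat.cast_lt]
  rw [add_mul, one_mul] at hkey
  omega

end Analytic

theorem stmt_8_general {Fq K : Type*} [Field Fq] [Fintype Fq] [Field K]
    (ι : Polynomial Fq →+* K) (v : AbsoluteValue K ℝ)
    (hna : ∀ x y : K, v (x + y) ≤ max (v x) (v y))
    (hdeg : ∀ g : Polynomial Fq, g ≠ 0 → v (ι g) = (Fintype.card Fq : ℝ) ^ g.natDegree)
    (a : Polynomial Fq) (d : ℕ) (hda : a.natDegree = d) (hd : 0 < d)
    (b : Fq) (hb : b ≠ 0)
    (f : K) (hroot : f ^ 2 = ι a * f + ι (C b)) (hf : 1 < v f)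
    (Q : ℕ → Polynomial Fq) (hQ0 : Q 0 = 1) (hQ1 : Q 1 = a)
    (hQrec : ∀ n, Q (n + 2) = a * Q (n + 1) + C b * Q n)
    (c : Fq) (hc : c ≠ 0) (hca : (C c * a).Monic)
    (Qbar : ℕ → Polynomial Fq) (hQbar : ∀ n, Qbar n = C (c ^ n) * Q n)
    (l : ℕ) (N : ℕ)
    (lam : Polynomial Fq) (hlam0 : lam ≠ 0)
    (hlam : lam ∈ Lambda ι v f (((Fintype.card Fq : ℝ) ^ (N * d + l))⁻¹)) :
    ∃! p : Σ m : ℕ, Fin (m + 1) → Polynomial Fq,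
      (∀ i, (p.2 i).degree < (d : ℕ)) ∧
      (p.2 0).degree < ((d - l : ℕ) : WithBot ℕ) ∧
      p.2 (Fin.last p.1) ≠ 0 ∧
      lam = ∑ i : Fin (p.1 + 1), p.2 i * Qbar (N + (i : ℕ)) := by
  have hQbar_basis : ∀ n, (Qbar n).Monic ∧ (Qbar n).natDegree = n * d :=
    monic_and_natDegree_of_recurrence (β := c ^ 2 * b) hca (by rw [natDegree_C_mul hc, hda]) hd
      (by simp [hQbar, hQ0]) (by rw [hQbar, hQ1, pow_one])
      (fun n => by simp only [hQbar, hQrec, map_mul, map_pow]; ring)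
  have happrox : ∀ n, ι (Qbar n) * f =
      ι (C (c ^ n) * Q (n + 1)) - ι (C c) ^ n * (ι a - f) ^ (n + 1) := fun n => by
    rw [hQbar, map_mul, map_mul, succ_eq_mul_add_pow_of_recurrence (x := fun n => ι (Q n))
      (β := ι (C b)) (by simp [hQ0]) (by simp [hQ1])
      (fun n => by simp only [hQrec, map_add, map_mul]) (add_sub_cancel f (ι a))
      (by linear_combination -hroot) n]
    simp only [map_pow]
    ring
  have hunit : ∀ u : Fq, u ≠ 0 → v (ι (C u)) = 1 := fun u hu => by
    rw [hdeg _ (C_ne_zero.mpr hu), natDegree_C, pow_zero]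
  have ha0 : a ≠ 0 := by rintro rfl; simp at hda; omega
  have hva : v (ι a) = (Fintype.card Fq : ℝ) ^ d := by rw [hdeg a ha0, hda]
  have hE : ∀ n, v (ι (C c) ^ n * (ι a - f) ^ (n + 1)) =
      ((Fintype.card Fq : ℝ) ^ d)⁻¹ ^ (n + 1) := fun n => by
    rw [v.map_mul, v.map_pow, v.map_pow, hunit c hc, one_pow, one_mul,
      AbsoluteValue.map_sub_root_eq_inv hna hroot (hunit b hb)
        (hva ▸ one_le_pow₀ (Nat.one_le_cast.mpr Fintype.card_pos)) hf, hva]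
  obtain ⟨cc, hcc, hccM, hlam_eq⟩ := exists_digits hQbar_basis (lam.natDegree / d + 1)
    (degree_le_natDegree.trans_lt (by rw [add_mul, one_mul]; exact_mod_cast Nat.lt_div_mul_add hd))
  obtain ⟨hlow, hccN⟩ :=
    digits_vanish_of_mem_Lambda hna hdeg happrox hE hcc hccM hlam0 hlam_eq hlam
  exact existsUnique_expansion hQbar_basis hcc hccM hlow hlam0 hlam_eq
    (P := fun u => u.degree < ↑(d - l)) hccN

/-- Every nonzero `λ ∈ Λ_{q^{-Nd-l}}(f)` has a unique expansion
`λ = Σ_{i=0}^m c_i(T) Q̄_{N+i}` with `deg c_i ≤ d-1` for all `i`, `deg c_0 ≤ d-1-l`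
(i.e. `deg c_i < d` and `deg c_0 < d-l`), and `c_m ≠ 0`. -/
theorem stmt_8 {Fq K : Type*} [Field Fq] [Fintype Fq] [Field K]
    (ι : Polynomial Fq →+* K) (v : AbsoluteValue K ℝ)
    (hna : ∀ x y : K, v (x + y) ≤ max (v x) (v y))
    (hdeg : ∀ g : Polynomial Fq, g ≠ 0 → v (ι g) = (Fintype.card Fq : ℝ) ^ g.natDegree)
    (a : Polynomial Fq) (d : ℕ) (hda : a.natDegree = d) (hd : 0 < d)
    (b : Fq) (hb : b ≠ 0)
    (f : K) (hroot : f ^ 2 = ι a * f + ι (C b)) (hf : 1 < v f)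
    (Q : ℕ → Polynomial Fq) (hQ0 : Q 0 = 1) (hQ1 : Q 1 = a)
    (hQrec : ∀ n, Q (n + 2) = a * Q (n + 1) + C b * Q n)
    (c : Fq) (hc : c ≠ 0) (hca : (C c * a).Monic)
    (Qbar : ℕ → Polynomial Fq) (hQbar : ∀ n, Qbar n = C (c ^ n) * Q n)
    (l : ℕ) (hl : l ≤ d - 1) (N : ℕ)
    (lam : Polynomial Fq) (hlam0 : lam ≠ 0)
    (hlam : lam ∈ Lambda ι v f (((Fintype.card Fq : ℝ) ^ (N * d + l))⁻¹)) :
    ∃! p : Σ m : ℕ, Fin (m + 1) → Polynomial Fq,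
      (∀ i, (p.2 i).degree < (d : ℕ)) ∧
      (p.2 0).degree < ((d - l : ℕ) : WithBot ℕ) ∧
      p.2 (Fin.last p.1) ≠ 0 ∧
      lam = ∑ i : Fin (p.1 + 1), p.2 i * Qbar (N + (i : ℕ)) :=
  stmt_8_general ι v hna hdeg a d hda hd b hb f hroot hf Q hQ0 hQ1 hQrec c hc hca Qbar hQbar l N lam
    hlam0 hlam
end
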